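/- With M = X^T ∪ Y ∪ Z^T as constructed, suppose in addition that m ≤ q^{k−m−1}. Then M is a minimal (k−m)-block over F_q: every m-dimensional linear subspace of F_q^k contains an element of M, and for every x ∈ M there is a tangent at x, i.e. an m-dimensional linear subspace U of F_q^k such that M ∩ U is exactly the set of nonzero scalar multiples of x. -/
import Mathlib


/-- The support of a vector `x ∈ F_q^k`, as a finite set of coordinates. -/
def suppF {F : Type*} [Field F] [DecidableEq F] {k : ℕ} (x : Fin k → F) : Finset (Fin k) :=
  Finset.univ.filter fun i => x i ≠ 0

/-- `X^T`: the nonzero vectors whose support avoids `T`. -/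
def XT {F : Type*} [Field F] [DecidableEq F] {k : ℕ} (T : Finset (Fin k)) :
    Set (Fin k → F) :=
  {x | x ≠ 0 ∧ ∀ t ∈ T, x t = 0}

/-- `Y_𝒱^T`: the nonzero vectors whose support meets `T` in exactly one coordinate,
with all nonzero scalar multiples of the vectors `v_i + λ•e_j` (for `j ∈ T` and
`λ ≠ 0`) removed. -/
def YT {F : Type*} [Field F] [DecidableEq F] {k : ℕ} {ι : Type*} (T : Finset (Fin k))
    (v : ι → Fin k → F) : Set (Fin k → F) :=
  {x | x ≠ 0 ∧ (suppF x ∩ T).card = 1 ∧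
    ¬∃ i : ι, ∃ j ∈ T, ∃ lam c : F, lam ≠ 0 ∧ c ≠ 0 ∧
      x = c • (v i + lam • (Pi.single j (1 : F) : Fin k → F))}

/-- `Z^T`: the nonzero vectors whose support is a 2-element subset of `T`. -/
def ZT {F : Type*} [Field F] [DecidableEq F] {k : ℕ} (T : Finset (Fin k)) :
    Set (Fin k → F) :=
  {x | x ≠ 0 ∧ suppF x ⊆ T ∧ (suppF x).card = 2}

/-- The point set `M = X^T ∪ Y_𝒱^T ∪ Z^T`. -/
def blockM {F : Type*} [Field F] [DecidableEq F] {k : ℕ} {ι : Type*} (T : Finset (Fin k))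
    (v : ι → Fin k → F) : Set (Fin k → F) :=
  XT T ∪ YT T v ∪ ZT T

section Helpers
variable {F : Type*} [Field F] [DecidableEq F] {k : ℕ}

theorem mem_suppF {x : Fin k → F} {i : Fin k} : i ∈ suppF x ↔ x i ≠ 0 := by
  simp [suppF]

theorem suppF_smul {c : F} (hc : c ≠ 0) (x : Fin k → F) : suppF (c • x) = suppF x := by
  ext i; simp [suppF, hc]

theorem smul_mem_blockM {ι : Type*} {T : Finset (Fin k)} {v : ι → Fin k → F}
    {x : Fin k → F} (hx : x ∈ blockM T v) {c : F} (hc : c ≠ 0) : c • x ∈ blockM T v := by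
  have hx0 : x ≠ 0 := by
    rcases hx with (h | h) | h
    exacts [h.1, h.1, h.1]
  have hcx0 : c • x ≠ 0 := smul_ne_zero hc hx0
  rcases hx with (h | h) | h
  · exact Or.inl (Or.inl ⟨hcx0, fun t ht => by simp [h.2 t ht]⟩)
  · refine Or.inl (Or.inr ⟨hcx0, by rw [suppF_smul hc]; exact h.2.1, ?_⟩)
    rintro ⟨i, j, hj, lam, c', hlam, hc', hxe⟩
    refine h.2.2 ⟨i, j, hj, lam, c⁻¹ * c', hlam, by simp [hc, hc'], ?_⟩
    have := congrArg (fun y => c⁻¹ • y) hxe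
    simp only [smul_smul, smul_add, inv_mul_cancel₀ hc, one_smul] at this
    rw [this]
    module
  · exact Or.inr ⟨hcx0, by rw [suppF_smul hc]; exact h.2.1, by rw [suppF_smul hc]; exact h.2.2⟩

theorem pair_lemma {n : ℕ} {v : Fin n → Fin k → F} (hv0 : ∀ i, v i ≠ 0)
    (hvind : ∀ i j, i ≠ j → ∀ c : F, v i ≠ c • v j) (b : Fin n → F)
    (hsum : ∑ i, b i • v i = 0) :
    (Finset.univ.filter fun i => b i ≠ 0).card ≠ 1 ∧
    (Finset.univ.filter fun i => b i ≠ 0).card ≠ 2 := by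
  classical
  have hres : ∑ i ∈ Finset.univ.filter (fun i => b i ≠ 0), b i • v i = 0 := by
    rw [Finset.sum_filter_of_ne (fun i _ h => by
      intro hb; exact h (by simp [hb]))]
    exact hsum
  constructor
  · intro h1
    obtain ⟨i0, hi0⟩ := Finset.card_eq_one.mp h1
    rw [hi0, Finset.sum_singleton] at hres
    have hbi : b i0 ≠ 0 := by
      have : i0 ∈ Finset.univ.filter fun i => b i ≠ 0 := by rw [hi0]; simp
      simpa using this
    exact hv0 i0 (by simpa [hbi] using smul_eq_zero.mp hres)
  · intro h2
    obtain ⟨i0, j0, hij, hset⟩ := Finset.card_eq_two.mp h2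
    have hbi : b i0 ≠ 0 := by
      have : i0 ∈ Finset.univ.filter fun i => b i ≠ 0 := by rw [hset]; simp
      simpa using this
    have hbj : b j0 ≠ 0 := by
      have : j0 ∈ Finset.univ.filter fun i => b i ≠ 0 := by rw [hset]; simp
      simpa using this
    rw [hset, Finset.sum_pair hij] at hres
    refine hvind i0 j0 hij ((b i0)⁻¹ * (- b j0)) ?_
    have : b i0 • v i0 = (- b j0) • v j0 := by
      rw [neg_smul]; linear_combination (norm := module) hres
    calc v i0 = (b i0)⁻¹ • (b i0 • v i0) := by rw [smul_smul, inv_mul_cancel₀ hbi, one_smul]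
    _ = ((b i0)⁻¹ * (- b j0)) • v j0 := by rw [this, smul_smul]

end Helpers
section Sums
variable {F : Type*} [Field F] [DecidableEq F] {k n : ℕ}

theorem sum_single_eval_eq (σ : Fin n → Fin k) (hσ : Function.Injective σ)
    (b : Fin n → F) (i0 : Fin n) :
    ∑ i, b i * (Pi.single (σ i) (1:F) : Fin k → F) (σ i0) = b i0 := by
  rw [Finset.sum_eq_single i0]
  · simp
  · intro i _ hne
    rw [Pi.single_apply, if_neg (fun h => hne (hσ h.symm))]
    ring
  · simp

theorem sum_single_eval_ne (σ : Fin n → Fin k) (b : Fin n → F) {u : Fin k}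
    (h : ∀ i, σ i ≠ u) :
    ∑ i, b i * (Pi.single (σ i) (1:F) : Fin k → F) u = 0 := by
  apply Finset.sum_eq_zero
  intro i _
  rw [Pi.single_apply, if_neg (fun hh => h i hh.symm)]
  ring

end Sums
section Part1
variable {F : Type*} [Field F] [Fintype F] [DecidableEq F] {k m : ℕ}

theorem part1 (hm1 : 1 ≤ m) (T : Finset (Fin k)) (hT : T.card = m)
    (v : Fin (m - 1) → Fin k → F) (hv0 : ∀ i, v i ≠ 0)
    (hvT : ∀ i, ∀ t ∈ T, v i t = 0)
    (U : Submodule F (Fin k → F)) (hU : Module.finrank F U = m) :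
    ∃ x ∈ blockM T v, x ∈ U := by
  classical
  set p : (Fin k → F) →ₗ[F] ({t // t ∈ T} → F) :=
    LinearMap.funLeft F F (fun t : {t // t ∈ T} => (t : Fin k)) with hp
  set q : U →ₗ[F] ({t // t ∈ T} → F) := p.comp U.subtype with hq'
  by_cases hinj : Function.Injective q
  · -- q is bijective
    have hcardT : Fintype.card {t // t ∈ T} = m := by
      rw [Fintype.card_coe, hT]
    have hfr : Module.finrank F U = Module.finrank F ({t // t ∈ T} → F) := by
      rw [hU, Module.finrank_pi, hcardT]
    have hsurj : Function.Surjective q :=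
      (LinearMap.injective_iff_surjective_of_finrank_eq_finrank hfr).mp hinj
    -- preimages of the standard basis vectors
    have hex : ∀ t : {t // t ∈ T}, ∃ y : U, q y = Pi.single t 1 := fun t => hsurj _
    choose X hX using hex
    have hXcoord : ∀ t : {t // t ∈ T}, ∀ u (hu : u ∈ T),
        (X t : Fin k → F) u = if u = (t : Fin k) then 1 else 0 := by
      intro t u hu
      have := congrFun (hX t) ⟨u, hu⟩
      simp only [hq', hp, LinearMap.comp_apply, LinearMap.funLeft_apply,
        Submodule.subtype_apply] at this
      rw [this, Pi.single_apply]
      simp [Subtype.ext_iff]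
    have hXt : ∀ t : {t // t ∈ T}, (X t : Fin k → F) (t : Fin k) = 1 := by
      intro t; rw [hXcoord t t t.2]; simp
    have hXne : ∀ t, (X t : Fin k → F) ≠ 0 := by
      intro t h
      have := hXt t
      rw [h] at this; simp at this
    have hXsupp : ∀ t : {t // t ∈ T}, (suppF (X t : Fin k → F) ∩ T) = {(t : Fin k)} := by
      intro t
      ext u
      simp only [Finset.mem_inter, mem_suppF, Finset.mem_singleton]
      constructor
      · rintro ⟨hne, hu⟩
        by_contra hut
        rw [hXcoord t u hu, if_neg hut] at hne
        exact hne rfl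
      · rintro rfl
        exact ⟨by rw [hXt t]; exact one_ne_zero, t.2⟩
    by_cases hY : ∃ t, (X t : Fin k → F) ∈ YT T v
    · obtain ⟨t, ht⟩ := hY
      exact ⟨X t, Or.inl (Or.inr ht), (X t).2⟩
    · push_neg at hY
      -- each X t is a removed vector
      have hrem : ∀ t : {t // t ∈ T}, ∃ i : Fin (m - 1), ∃ c : F, c ≠ 0 ∧
          (X t : Fin k → F) = c • v i + Pi.single (t : Fin k) 1 := by
        intro t
        have h1 : ¬ (X t : Fin k → F) ∈ YT T v := hY t
        simp only [YT, Set.mem_setOf_eq, not_and] at h1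
        have h2 := h1 (hXne t) (by rw [hXsupp t]; simp)
        rw [not_not] at h2
        obtain ⟨i, j, hj, lam, c, hlam, hc, heq⟩ := h2
        have hXj : (X t : Fin k → F) j = c * lam := by
          rw [heq]; simp [hvT i j hj]
        have hclam : c * lam ≠ 0 := mul_ne_zero hc hlam
        have hjt : j = (t : Fin k) := by
          by_contra hjt
          rw [hXcoord t j hj, if_neg hjt] at hXj
          exact hclam hXj.symm
        have hone : c * lam = 1 := by
          rw [← hXj, hjt, hXt t]
        refine ⟨i, c, hc, ?_⟩
        rw [heq, hjt]
        rw [smul_add, smul_smul, hone, one_smul]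
      choose iF cF hcF hXeq using hrem
      have hcard : Fintype.card (Fin (m - 1)) < Fintype.card {t // t ∈ T} := by
        rw [Fintype.card_coe, hT, Fintype.card_fin]
        omega
      obtain ⟨t, s, hts, hi⟩ := Fintype.exists_ne_map_eq_of_card_lt iF hcard
      set z : U := cF s • X t - cF t • X s with hzdef
      have hz : (z : Fin k → F)
          = cF s • (Pi.single (t : Fin k) 1 : Fin k → F)
            - cF t • (Pi.single (s : Fin k) 1 : Fin k → F) := by
        have h0 : (z : Fin k → F)
            = cF s • ((X t : Fin k → F)) - cF t • ((X s : Fin k → F)) := by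
          simp [hzdef]
        rw [h0, hXeq t, hXeq s, hi]
        module
      have htsv : (t : Fin k) ≠ (s : Fin k) := fun h => hts (Subtype.ext h)
      have hzt : (z : Fin k → F) (t : Fin k) = cF s := by
        rw [hz]; simp [Pi.single_apply, htsv, Ne.symm htsv]
      have hzs : (z : Fin k → F) (s : Fin k) = - cF t := by
        rw [hz]; simp [Pi.single_apply, htsv, Ne.symm htsv]
      have hsupp : suppF (z : Fin k → F) = {(t : Fin k), (s : Fin k)} := by
        ext u
        simp only [mem_suppF, Finset.mem_insert, Finset.mem_singleton]
        constructor
        · intro hne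
          by_contra hu
          push_neg at hu
          rw [hz] at hne
          simp [Pi.single_apply, hu.1, hu.2] at hne
        · rintro (rfl | rfl)
          · rw [hzt]; exact hcF s
          · rw [hzs]; simpa using hcF t
      refine ⟨z, Or.inr ⟨?_, ?_, ?_⟩, z.2⟩
      · intro h
        have := hzt
        rw [h] at this
        exact hcF s this.symm
      · rw [hsupp]
        intro u hu
        simp only [Finset.mem_insert, Finset.mem_singleton] at hu
        rcases hu with rfl | rfl
        exacts [t.2, s.2]
      · rw [hsupp, Finset.card_insert_of_notMem (by simp [htsv]), Finset.card_singleton]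
  · -- q is not injective : kernel element lies in XT
    have : ∃ y : U, y ≠ 0 ∧ q y = 0 := by
      by_contra hcon
      push_neg at hcon
      exact hinj ((injective_iff_map_eq_zero q).mpr fun y hy =>
        by_contra fun h0 => hcon y h0 hy)
    obtain ⟨y, hy0, hyq⟩ := this
    refine ⟨y, Or.inl (Or.inl ⟨?_, ?_⟩), y.2⟩
    · simpa [Submodule.coe_eq_zero] using hy0
    · intro u hu
      have := congrFun hyq ⟨u, hu⟩
      simpa [hq', hp] using this

end Part1
section TangentZ
variable {F : Type*} [Field F] [Fintype F] [DecidableEq F] {k m : ℕ}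

theorem tangentZ (hm1 : 1 ≤ m) (T : Finset (Fin k)) (hT : T.card = m)
    (v : Fin (m - 1) → Fin k → F) (hv0 : ∀ i, v i ≠ 0)
    (hvind : ∀ i j, i ≠ j → ∀ c : F, v i ≠ c • v j)
    (hvT : ∀ i, ∀ t ∈ T, v i t = 0)
    (x : Fin k → F) (hx : x ∈ ZT T) :
    ∃ U : Submodule F (Fin k → F), Module.finrank F U = m ∧
      blockM T v ∩ (U : Set (Fin k → F)) = {y | ∃ c : F, c ≠ 0 ∧ y = c • x} := by
  classical
  obtain ⟨hx0, hxsub, hxcard⟩ := hx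
  obtain ⟨t, s, hts, hsupp⟩ := Finset.card_eq_two.mp hxcard
  have htT : t ∈ T := hxsub (by rw [hsupp]; simp)
  have hsT : s ∈ T := hxsub (by rw [hsupp]; simp)
  have hα : x t ≠ 0 := mem_suppF.mp (by rw [hsupp]; simp)
  have hβ : x s ≠ 0 := mem_suppF.mp (by rw [hsupp]; simp)
  have hxu : ∀ u, u ≠ t → u ≠ s → x u = 0 := by
    intro u hut hus
    by_contra h
    have : u ∈ suppF x := mem_suppF.mpr h
    rw [hsupp] at this
    simp only [Finset.mem_insert, Finset.mem_singleton] at this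
    tauto
  -- enumerate T.erase t
  have herase : (T.erase t).card = m - 1 := by
    rw [Finset.card_erase_of_mem htT, hT]
  set σ : Fin (m - 1) → Fin k :=
    fun i => ((T.erase t).orderIsoOfFin herase i : Fin k) with hσdef
  have hσmem : ∀ i, σ i ∈ T.erase t := fun i => ((T.erase t).orderIsoOfFin herase i).2
  have hσT : ∀ i, σ i ∈ T := fun i => Finset.mem_of_mem_erase (hσmem i)
  have hσt : ∀ i, σ i ≠ t := fun i => Finset.ne_of_mem_erase (hσmem i)
  have hσinj : Function.Injective σ := fun i j h =>
    (OrderIso.injective _) (Subtype.ext h)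
  have hσsurj : ∀ u ∈ T.erase t, ∃ i, σ i = u := by
    intro u hu
    exact ⟨((T.erase t).orderIsoOfFin herase).symm ⟨u, hu⟩,
      congrArg Subtype.val (((T.erase t).orderIsoOfFin herase).apply_symm_apply ⟨u, hu⟩)⟩
  obtain ⟨is, his⟩ := hσsurj s (Finset.mem_erase.mpr ⟨fun h => hts h.symm, hsT⟩)
  -- the spanning family
  set w : Fin (m - 1) → Fin k → F :=
    fun i => v i + (Pi.single (σ i) (1:F) : Fin k → F) with hwdef
  set f : Option (Fin (m - 1)) → Fin k → F := fun o => o.elim x w with hfdef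
  -- coordinate computations for combinations
  have key : ∀ (a : F) (b : Fin (m - 1) → F) (u : Fin k),
      (a • x + ∑ i, b i • w i) u = a * x u + ∑ i, b i * (v i u + (Pi.single (σ i) (1:F) : Fin k → F) u) := by
    intro a b u
    simp [hwdef, Finset.sum_apply, mul_add]
  have keyT : ∀ (a : F) (b : Fin (m - 1) → F), ∀ u ∈ T,
      (a • x + ∑ i, b i • w i) u = a * x u + ∑ i, b i * (Pi.single (σ i) (1:F) : Fin k → F) u := by
    intro a b u hu
    rw [key]
    congr 1
    apply Finset.sum_congr rfl
    intro i _
    rw [hvT i u hu, zero_add]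
  have keyt : ∀ (a : F) (b : Fin (m - 1) → F),
      (a • x + ∑ i, b i • w i) t = a * x t := by
    intro a b
    rw [keyT a b t htT, sum_single_eval_ne σ b (fun i => hσt i), add_zero]
  have keyσ : ∀ (a : F) (b : Fin (m - 1) → F) (i0 : Fin (m - 1)),
      (a • x + ∑ i, b i • w i) (σ i0) = a * x (σ i0) + b i0 := by
    intro a b i0
    rw [keyT a b (σ i0) (hσT i0), sum_single_eval_eq σ hσinj b i0]
  have keyS : ∀ (a : F) (b : Fin (m - 1) → F), ∀ u ∉ T,
      (a • x + ∑ i, b i • w i) u = ∑ i, b i * v i u := by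
    intro a b u hu
    rw [key, hxu u (fun h => hu (by rw [h]; exact htT)) (fun h => hu (by rw [h]; exact hsT)),
      mul_zero, zero_add]
    apply Finset.sum_congr rfl
    intro i _
    rw [Pi.single_apply, if_neg (fun h => hu (by rw [h]; exact hσT i)), add_zero]
  -- linear independence
  have hli : LinearIndependent F f := by
    rw [Fintype.linearIndependent_iff]
    intro g hg
    rw [Fintype.sum_option] at hg
    have hg' : g none • x + ∑ i, g (some i) • w i = 0 := hg
    have ha : g none = 0 := by
      have := congrFun hg' t
      rw [keyt] at this
      simpa [hα] using this
    have hb : ∀ i0, g (some i0) = 0 := by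
      intro i0
      have := congrFun hg' (σ i0)
      rw [keyσ, ha] at this
      simpa using this
    intro o
    cases o with
    | none => exact ha
    | some i => exact hb i
  refine ⟨Submodule.span F (Set.range f), ?_, ?_⟩
  · rw [finrank_span_eq_card hli, Fintype.card_option, Fintype.card_fin]
    omega
  ext y
  constructor
  · rintro ⟨hyM, hyU⟩
    obtain ⟨c, hc⟩ := (Submodule.mem_span_range_iff_exists_fun F).mp hyU
    rw [Fintype.sum_option] at hc
    set a := c none with hadef
    set b : Fin (m - 1) → F := fun i => c (some i) with hbdef
    have hy : a • x + ∑ i, b i • w i = y := hc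
    have hyt : y t = a * x t := by rw [← hy]; exact keyt a b
    have hyσ : ∀ i0, y (σ i0) = a * x (σ i0) + b i0 := by
      intro i0; rw [← hy]; exact keyσ a b i0
    have hyS : ∀ u ∉ T, y u = ∑ i, b i * v i u := by
      intro u hu; rw [← hy]; exact keyS a b u hu
    have hxσ : ∀ i0, i0 ≠ is → x (σ i0) = 0 := by
      intro i0 hne
      exact hxu (σ i0) (hσt i0) (fun h => hne (hσinj (h.trans his.symm)))
    rcases hyM with (hX | hY) | hZ
    · -- y ∈ XT : impossible
      exfalso
      obtain ⟨hy0, hyT⟩ := hX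
      have ha : a = 0 := by
        have := hyT t htT
        rw [hyt] at this
        exact (mul_eq_zero.mp this).resolve_right hα
      have hb : ∀ i0, b i0 = 0 := by
        intro i0
        have := hyT (σ i0) (hσT i0)
        rw [hyσ i0, ha, zero_mul, zero_add] at this
        exact this
      apply hy0
      rw [← hy, ha]
      simp [funext hb]
    · -- y ∈ YT : impossible
      exfalso
      obtain ⟨hy0, hcard1, hnrem⟩ := hY
      obtain ⟨u0, hu0⟩ := Finset.card_eq_one.mp hcard1
      have hu0T : u0 ∈ T := by
        have : u0 ∈ suppF y ∩ T := by rw [hu0]; simp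
        exact (Finset.mem_inter.mp this).2
      have hyu0 : y u0 ≠ 0 := by
        have : u0 ∈ suppF y ∩ T := by rw [hu0]; simp
        exact mem_suppF.mp (Finset.mem_inter.mp this).1
      have hyzero : ∀ u ∈ T, u ≠ u0 → y u = 0 := by
        intro u hu hne
        by_contra h
        have : u ∈ suppF y ∩ T := Finset.mem_inter.mpr ⟨mem_suppF.mpr h, hu⟩
        rw [hu0] at this
        exact hne (Finset.mem_singleton.mp this)
      by_cases hu0t : u0 = t
      · -- the combination is a removed vector supported at t
        subst hu0t
        have ha : a ≠ 0 := by
          intro h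
          apply hyu0
          rw [hyt, h, zero_mul]
        have hb : ∀ i0, i0 ≠ is → b i0 = 0 := by
          intro i0 hne
          have := hyzero (σ i0) (hσT i0) (hσt i0)
          rw [hyσ i0, hxσ i0 hne, mul_zero, zero_add] at this
          exact this
        have hbis : b is = - (a * x s) := by
          have := hyzero (σ is) (hσT is) (hσt is)
          rw [hyσ is, his] at this
          linear_combination this
        -- y is a removed vector, contradicting hnrem
        set cc : F := -(a * x s) with hccdef
        have hcc : cc ≠ 0 := by
          simp only [hccdef, neg_ne_zero]
          exact mul_ne_zero ha hβ
        set lam : F := (a * x u0) * cc⁻¹ with hlamdef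
        have hcl : cc * lam = a * x u0 := by
          rw [hlamdef, mul_comm (a * x u0) cc⁻¹, ← mul_assoc, mul_inv_cancel₀ hcc, one_mul]
        have hlam : lam ≠ 0 := by
          intro h
          rw [h, mul_zero] at hcl
          exact mul_ne_zero ha hα hcl.symm
        refine hnrem ⟨is, u0, htT, lam, cc, hlam, hcc, ?_⟩
        funext u
        have hrhs : (cc • (v is + lam • (Pi.single u0 (1:F) : Fin k → F))) u
            = cc * v is u + (cc * lam) * (Pi.single u0 (1:F) : Fin k → F) u := by
          simp [mul_add, mul_assoc]
        rw [hrhs, hcl]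
        by_cases huT : u ∈ T
        · rw [hvT is u huT, mul_zero, zero_add, Pi.single_apply]
          by_cases hut : u = u0
          · subst hut
            rw [if_pos rfl, mul_one, hyt]
          · rw [if_neg hut, mul_zero, hyzero u huT hut]
        · rw [Pi.single_apply, if_neg (fun h => huT (by rw [h]; exact htT)), mul_zero, add_zero]
          rw [hyS u huT, Finset.sum_eq_single is]
          · rw [hbis]
          · intro i _ hne
            rw [hb i hne, zero_mul]
          · simp
      · -- u0 ≠ t : again a removed vector
        have ha : a = 0 := by
          have h1 := hyzero t htT (fun h => hu0t h.symm)
          rw [hyt] at h1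
          exact (mul_eq_zero.mp h1).resolve_right hα
        have hyσ' : ∀ i0, y (σ i0) = b i0 := by
          intro i0
          rw [hyσ i0, ha, zero_mul, zero_add]
        obtain ⟨i1, hi1⟩ := hσsurj u0 (Finset.mem_erase.mpr ⟨hu0t, hu0T⟩)
        have hbi1 : b i1 ≠ 0 := by
          rw [← hyσ' i1, hi1]
          exact hyu0
        have hbz : ∀ i0, i0 ≠ i1 → b i0 = 0 := by
          intro i0 hne
          rw [← hyσ' i0]
          exact hyzero (σ i0) (hσT i0) (fun h => hne (hσinj (h.trans hi1.symm)))
        refine hnrem ⟨i1, σ i1, hσT i1, 1, b i1, one_ne_zero, hbi1, ?_⟩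
        funext u
        have hrhs : ((b i1) • (v i1 + (1:F) • (Pi.single (σ i1) (1:F) : Fin k → F))) u
            = b i1 * v i1 u + b i1 * (Pi.single (σ i1) (1:F) : Fin k → F) u := by
          simp [mul_add]
        rw [hrhs]
        by_cases huT : u ∈ T
        · rw [hvT i1 u huT, mul_zero, zero_add, Pi.single_apply]
          by_cases hut : u = σ i1
          · subst hut
            rw [if_pos rfl, mul_one, hyσ' i1]
          · rw [if_neg hut, mul_zero]
            exact hyzero u huT (fun h => hut (h.trans hi1.symm))
        · rw [Pi.single_apply, if_neg (fun h => huT (by rw [h]; exact hσT i1)), mul_zero, add_zero]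
          rw [hyS u huT, Finset.sum_eq_single i1]
          · intro i _ hne
            rw [hbz i hne, zero_mul]
          · simp
    · -- y ∈ ZT : y must be a multiple of x
      obtain ⟨hy0, hysub, hycard⟩ := hZ
      have hyout : ∀ u, u ∉ T → y u = 0 := by
        intro u hu
        by_contra h
        exact hu (hysub (mem_suppF.mpr h))
      have hvb : ∑ i, b i • v i = 0 := by
        funext u
        rw [Finset.sum_apply]
        simp only [Pi.smul_apply, smul_eq_mul, Pi.zero_apply]
        by_cases huT : u ∈ T
        · exact Finset.sum_eq_zero fun i _ => by rw [hvT i u huT, mul_zero]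
        · rw [← hyS u huT]
          exact hyout u huT
      set B : Finset (Fin (m - 1)) := Finset.univ.filter (fun i => b i ≠ 0) with hBdef
      obtain ⟨hp1, hp2⟩ := pair_lemma hv0 hvind b hvb
      rw [← hBdef] at hp1 hp2
      by_cases hB0 : B.card = 0
      · -- all b vanish: y = a • x
        have hb : ∀ i, b i = 0 := by
          intro i
          by_contra h
          have : i ∈ B := by simp [hBdef, h]
          rw [Finset.card_eq_zero.mp hB0] at this
          exact absurd this (Finset.notMem_empty i)
        have hyx : y = a • x := by
          rw [← hy]
          simp [funext hb]
        have ha : a ≠ 0 := by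
          intro h
          apply hy0
          rw [hyx, h, zero_smul]
        exact ⟨a, ha, hyx⟩
      · exfalso
        have hB3 : 2 < B.card := by omega
        by_cases hA : a = 0
        · obtain ⟨i1, hi1, i2, hi2, i3, hi3, h12, h13, h23⟩ := Finset.two_lt_card.mp hB3
          have hm' : ∀ i', i' ∈ B → σ i' ∈ suppF y := by
            intro i' hi'
            rw [mem_suppF, hyσ i', hA, zero_mul, zero_add]
            exact (Finset.mem_filter.mp hi').2
          have : 2 < (suppF y).card := Finset.two_lt_card.mpr
            ⟨σ i1, hm' i1 hi1, σ i2, hm' i2 hi2, σ i3, hm' i3 hi3,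
              fun h => h12 (hσinj h), fun h => h13 (hσinj h), fun h => h23 (hσinj h)⟩
          omega
        · have hBe : 1 < (B.erase is).card := by
            have := Finset.pred_card_le_card_erase (s := B) (a := is)
            omega
          obtain ⟨j1, hj1, j2, hj2, hj12⟩ := Finset.one_lt_card.mp hBe
          have hmem : ∀ j, j ∈ B.erase is → σ j ∈ suppF y := by
            intro j hj
            rw [mem_suppF, hyσ j, hxσ j (Finset.ne_of_mem_erase hj), mul_zero, zero_add]
            exact (Finset.mem_filter.mp (Finset.mem_of_mem_erase hj)).2
          have htm : t ∈ suppF y := by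
            rw [mem_suppF, hyt]
            exact mul_ne_zero hA hα
          have : 2 < (suppF y).card := Finset.two_lt_card.mpr
            ⟨t, htm, σ j1, hmem j1 hj1, σ j2, hmem j2 hj2,
              fun h => hσt j1 h.symm, fun h => hσt j2 h.symm, fun h => hj12 (hσinj h)⟩
          omega
  · rintro ⟨c, hc0, rfl⟩
    refine ⟨smul_mem_blockM (Or.inr ⟨hx0, hxsub, hxcard⟩) hc0, ?_⟩
    exact Submodule.smul_mem _ _ (Submodule.subset_span ⟨none, rfl⟩)

end TangentZ
section TangentY
variable {F : Type*} [Field F] [Fintype F] [DecidableEq F] {k m : ℕ}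

theorem tangentY (hm1 : 1 ≤ m) (T : Finset (Fin k)) (hT : T.card = m)
    (v : Fin (m - 1) → Fin k → F) (hv0 : ∀ i, v i ≠ 0)
    (hvind : ∀ i j, i ≠ j → ∀ c : F, v i ≠ c • v j)
    (hvT : ∀ i, ∀ t ∈ T, v i t = 0)
    (x : Fin k → F) (hx : x ∈ YT T v) :
    ∃ U : Submodule F (Fin k → F), Module.finrank F U = m ∧
      blockM T v ∩ (U : Set (Fin k → F)) = {y | ∃ c : F, c ≠ 0 ∧ y = c • x} := by
  classical
  obtain ⟨hx0, hxcard, hnremx⟩ := hx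
  obtain ⟨t, hsupp⟩ := Finset.card_eq_one.mp hxcard
  have htT : t ∈ T := by
    have : t ∈ suppF x ∩ T := by rw [hsupp]; simp
    exact (Finset.mem_inter.mp this).2
  have hξ : x t ≠ 0 := by
    have : t ∈ suppF x ∩ T := by rw [hsupp]; simp
    exact mem_suppF.mp (Finset.mem_inter.mp this).1
  have hxT0 : ∀ u ∈ T, u ≠ t → x u = 0 := by
    intro u hu hne
    by_contra h
    have : u ∈ suppF x ∩ T := Finset.mem_inter.mpr ⟨mem_suppF.mpr h, hu⟩
    rw [hsupp] at this
    exact hne (Finset.mem_singleton.mp this)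
  have herase : (T.erase t).card = m - 1 := by
    rw [Finset.card_erase_of_mem htT, hT]
  set σ : Fin (m - 1) → Fin k :=
    fun i => ((T.erase t).orderIsoOfFin herase i : Fin k) with hσdef
  have hσmem : ∀ i, σ i ∈ T.erase t := fun i => ((T.erase t).orderIsoOfFin herase i).2
  have hσT : ∀ i, σ i ∈ T := fun i => Finset.mem_of_mem_erase (hσmem i)
  have hσt : ∀ i, σ i ≠ t := fun i => Finset.ne_of_mem_erase (hσmem i)
  have hσinj : Function.Injective σ := fun i j h =>
    (OrderIso.injective _) (Subtype.ext h)
  have hσsurj : ∀ u ∈ T.erase t, ∃ i, σ i = u := by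
    intro u hu
    exact ⟨((T.erase t).orderIsoOfFin herase).symm ⟨u, hu⟩,
      congrArg Subtype.val (((T.erase t).orderIsoOfFin herase).apply_symm_apply ⟨u, hu⟩)⟩
  set w : Fin (m - 1) → Fin k → F :=
    fun i => v i + (Pi.single (σ i) (1:F) : Fin k → F) with hwdef
  set f : Option (Fin (m - 1)) → Fin k → F := fun o => o.elim x w with hfdef
  have key : ∀ (a : F) (b : Fin (m - 1) → F) (u : Fin k),
      (a • x + ∑ i, b i • w i) u
        = a * x u + ∑ i, b i * (v i u + (Pi.single (σ i) (1:F) : Fin k → F) u) := by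
    intro a b u
    simp [hwdef, Finset.sum_apply, mul_add]
  have keyT : ∀ (a : F) (b : Fin (m - 1) → F), ∀ u ∈ T,
      (a • x + ∑ i, b i • w i) u
        = a * x u + ∑ i, b i * (Pi.single (σ i) (1:F) : Fin k → F) u := by
    intro a b u hu
    rw [key]
    congr 1
    exact Finset.sum_congr rfl fun i _ => by rw [hvT i u hu, zero_add]
  have keyt : ∀ (a : F) (b : Fin (m - 1) → F),
      (a • x + ∑ i, b i • w i) t = a * x t := by
    intro a b
    rw [keyT a b t htT, sum_single_eval_ne σ b (fun i => hσt i), add_zero]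
  have keyσ : ∀ (a : F) (b : Fin (m - 1) → F) (i0 : Fin (m - 1)),
      (a • x + ∑ i, b i • w i) (σ i0) = b i0 := by
    intro a b i0
    rw [keyT a b (σ i0) (hσT i0), sum_single_eval_eq σ hσinj b i0,
      hxT0 (σ i0) (hσT i0) (hσt i0), mul_zero, zero_add]
  have keyS : ∀ (a : F) (b : Fin (m - 1) → F), ∀ u ∉ T,
      (a • x + ∑ i, b i • w i) u = a * x u + ∑ i, b i * v i u := by
    intro a b u hu
    rw [key]
    congr 1
    exact Finset.sum_congr rfl fun i _ => by
      rw [Pi.single_apply, if_neg (fun h => hu (by rw [h]; exact hσT i)), add_zero]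
  have hli : LinearIndependent F f := by
    rw [Fintype.linearIndependent_iff]
    intro g hg
    rw [Fintype.sum_option] at hg
    have hg' : g none • x + ∑ i, g (some i) • w i = 0 := hg
    have ha : g none = 0 := by
      have := congrFun hg' t
      rw [keyt] at this
      simpa [hξ] using this
    have hb : ∀ i0, g (some i0) = 0 := by
      intro i0
      have := congrFun hg' (σ i0)
      rw [keyσ] at this
      simpa using this
    intro o
    cases o with
    | none => exact ha
    | some i => exact hb i
  refine ⟨Submodule.span F (Set.range f), ?_, ?_⟩
  · rw [finrank_span_eq_card hli, Fintype.card_option, Fintype.card_fin]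
    omega
  ext y
  constructor
  · rintro ⟨hyM, hyU⟩
    obtain ⟨c, hc⟩ := (Submodule.mem_span_range_iff_exists_fun F).mp hyU
    rw [Fintype.sum_option] at hc
    set a := c none with hadef
    set b : Fin (m - 1) → F := fun i => c (some i) with hbdef
    have hy : a • x + ∑ i, b i • w i = y := hc
    have hyt : y t = a * x t := by rw [← hy]; exact keyt a b
    have hyσ : ∀ i0, y (σ i0) = b i0 := by
      intro i0; rw [← hy]; exact keyσ a b i0
    have hyS : ∀ u ∉ T, y u = a * x u + ∑ i, b i * v i u := by
      intro u hu; rw [← hy]; exact keyS a b u hu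
    rcases hyM with (hX | hY) | hZ
    · -- y ∈ XT : impossible
      exfalso
      obtain ⟨hy0, hyT⟩ := hX
      have ha : a = 0 := by
        have := hyT t htT
        rw [hyt] at this
        exact (mul_eq_zero.mp this).resolve_right hξ
      have hb : ∀ i0, b i0 = 0 := by
        intro i0
        rw [← hyσ i0]
        exact hyT (σ i0) (hσT i0)
      apply hy0
      rw [← hy, ha]
      simp [funext hb]
    · -- y ∈ YT : it must be a multiple of x
      obtain ⟨hy0, hcard1, hnrem⟩ := hY
      obtain ⟨u0, hu0⟩ := Finset.card_eq_one.mp hcard1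
      have hu0T : u0 ∈ T := by
        have : u0 ∈ suppF y ∩ T := by rw [hu0]; simp
        exact (Finset.mem_inter.mp this).2
      have hyu0 : y u0 ≠ 0 := by
        have : u0 ∈ suppF y ∩ T := by rw [hu0]; simp
        exact mem_suppF.mp (Finset.mem_inter.mp this).1
      have hyzero : ∀ u ∈ T, u ≠ u0 → y u = 0 := by
        intro u hu hne
        by_contra h
        have : u ∈ suppF y ∩ T := Finset.mem_inter.mpr ⟨mem_suppF.mpr h, hu⟩
        rw [hu0] at this
        exact hne (Finset.mem_singleton.mp this)
      by_cases hu0t : u0 = t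
      · -- y = a • x
        subst hu0t
        have hb : ∀ i0, b i0 = 0 := by
          intro i0
          rw [← hyσ i0]
          exact hyzero (σ i0) (hσT i0) (hσt i0)
        have hyx : y = a • x := by
          rw [← hy]
          simp [funext hb]
        have ha : a ≠ 0 := by
          intro h
          apply hyu0
          rw [hyx, h, zero_smul]
          rfl
        exact ⟨a, ha, hyx⟩
      · -- removed vector, contradiction
        exfalso
        have ha : a = 0 := by
          have h1 := hyzero t htT (fun h => hu0t h.symm)
          rw [hyt] at h1
          exact (mul_eq_zero.mp h1).resolve_right hξ
        obtain ⟨i1, hi1⟩ := hσsurj u0 (Finset.mem_erase.mpr ⟨hu0t, hu0T⟩)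
        have hbi1 : b i1 ≠ 0 := by
          rw [← hyσ i1, hi1]
          exact hyu0
        have hbz : ∀ i0, i0 ≠ i1 → b i0 = 0 := by
          intro i0 hne
          rw [← hyσ i0]
          exact hyzero (σ i0) (hσT i0) (fun h => hne (hσinj (h.trans hi1.symm)))
        refine hnrem ⟨i1, σ i1, hσT i1, 1, b i1, one_ne_zero, hbi1, ?_⟩
        funext u
        have hrhs : ((b i1) • (v i1 + (1:F) • (Pi.single (σ i1) (1:F) : Fin k → F))) u
            = b i1 * v i1 u + b i1 * (Pi.single (σ i1) (1:F) : Fin k → F) u := by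
          simp [mul_add]
        rw [hrhs]
        by_cases huT : u ∈ T
        · rw [hvT i1 u huT, mul_zero, zero_add, Pi.single_apply]
          by_cases hut : u = σ i1
          · subst hut
            rw [if_pos rfl, mul_one, hyσ i1]
          · rw [if_neg hut, mul_zero]
            exact hyzero u huT (fun h => hut (h.trans hi1.symm))
        · rw [Pi.single_apply, if_neg (fun h => huT (by rw [h]; exact hσT i1)), mul_zero,
            add_zero, hyS u huT, ha, zero_mul, zero_add, Finset.sum_eq_single i1]
          · intro i _ hne
            rw [hbz i hne, zero_mul]
          · simp
    · -- y ∈ ZT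
      obtain ⟨hy0, hysub, hycard⟩ := hZ
      have hyout : ∀ u, u ∉ T → y u = 0 := by
        intro u hu
        by_contra h
        exact hu (hysub (mem_suppF.mpr h))
      set B : Finset (Fin (m - 1)) := Finset.univ.filter (fun i => b i ≠ 0) with hBdef
      by_cases hA : a = 0
      · exfalso
        have hvb : ∑ i, b i • v i = 0 := by
          funext u
          rw [Finset.sum_apply]
          simp only [Pi.smul_apply, smul_eq_mul, Pi.zero_apply]
          by_cases huT : u ∈ T
          · exact Finset.sum_eq_zero fun i _ => by rw [hvT i u huT, mul_zero]
          · have := hyS u huT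
            rw [hyout u huT, hA, zero_mul, zero_add] at this
            exact this.symm
        obtain ⟨hp1, hp2⟩ := pair_lemma hv0 hvind b hvb
        rw [← hBdef] at hp1 hp2
        by_cases hB0 : B.card = 0
        · have hb : ∀ i, b i = 0 := by
            intro i
            by_contra h
            have : i ∈ B := by simp [hBdef, h]
            rw [Finset.card_eq_zero.mp hB0] at this
            exact absurd this (Finset.notMem_empty i)
          apply hy0
          rw [← hy, hA]
          simp [funext hb]
        · have hB3 : 2 < B.card := by omega
          obtain ⟨i1, hi1, i2, hi2, i3, hi3, h12, h13, h23⟩ := Finset.two_lt_card.mp hB3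
          have hm' : ∀ i', i' ∈ B → σ i' ∈ suppF y := by
            intro i' hi'
            rw [mem_suppF, hyσ i']
            exact (Finset.mem_filter.mp hi').2
          have : 2 < (suppF y).card := Finset.two_lt_card.mpr
            ⟨σ i1, hm' i1 hi1, σ i2, hm' i2 hi2, σ i3, hm' i3 hi3,
              fun h => h12 (hσinj h), fun h => h13 (hσinj h), fun h => h23 (hσinj h)⟩
          omega
      · -- a ≠ 0 : x would be a removed vector, contradiction with hnremx
        exfalso
        have hsuppy : suppF y = insert t (B.image σ) := by
          ext u
          simp only [Finset.mem_insert, Finset.mem_image, mem_suppF]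
          constructor
          · intro hne
            have huT : u ∈ T := by
              by_contra h
              exact hne (hyout u h)
            by_cases hut : u = t
            · exact Or.inl hut
            · obtain ⟨i1, hi1⟩ := hσsurj u (Finset.mem_erase.mpr ⟨hut, huT⟩)
              refine Or.inr ⟨i1, ?_, hi1⟩
              rw [hBdef, Finset.mem_filter]
              refine ⟨Finset.mem_univ _, ?_⟩
              rw [← hyσ i1, hi1]
              exact hne
          · rintro (rfl | ⟨i1, hi1B, rfl⟩)
            · rw [hyt]
              exact mul_ne_zero hA hξ
            · rw [hyσ i1]
              exact (Finset.mem_filter.mp hi1B).2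
        have hcardB : B.card = 1 := by
          have h1 : (suppF y).card = 1 + B.card := by
            rw [hsuppy, Finset.card_insert_of_notMem (by
              intro hmem
              obtain ⟨i1, -, hi1⟩ := Finset.mem_image.mp hmem
              exact hσt i1 hi1), Finset.card_image_of_injective _ hσinj]
            omega
          omega
        obtain ⟨i0, hi0⟩ := Finset.card_eq_one.mp hcardB
        have hbi0 : b i0 ≠ 0 := by
          have : i0 ∈ B := by rw [hi0]; simp
          exact (Finset.mem_filter.mp this).2
        have hbz : ∀ i, i ≠ i0 → b i = 0 := by
          intro i hne
          by_contra h
          have : i ∈ B := by simp [hBdef, h]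
          rw [hi0] at this
          exact hne (Finset.mem_singleton.mp this)
        -- the off-T equation : a * x u + b i0 * v i0 u = 0 for u ∉ T
        have hoff : ∀ u, u ∉ T → a * x u + b i0 * v i0 u = 0 := by
          intro u hu
          have := hyS u hu
          rw [hyout u hu, Finset.sum_eq_single i0] at this
          · exact this.symm
          · intro i _ hne
            rw [hbz i hne, zero_mul]
          · simp
        set cc : F := -(b i0) * a⁻¹ with hccdef
        have hcc : cc ≠ 0 := by
          simp only [hccdef, neg_mul, neg_ne_zero]
          exact mul_ne_zero hbi0 (inv_ne_zero hA)
        set lam : F := x t * cc⁻¹ with hlamdef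
        have hcl : cc * lam = x t := by
          rw [hlamdef, mul_comm (x t) cc⁻¹, ← mul_assoc, mul_inv_cancel₀ hcc, one_mul]
        have hlam : lam ≠ 0 := by
          intro h
          rw [h, mul_zero] at hcl
          exact hξ hcl.symm
        refine hnremx ⟨i0, t, htT, lam, cc, hlam, hcc, ?_⟩
        funext u
        have hrhs : (cc • (v i0 + lam • (Pi.single t (1:F) : Fin k → F))) u
            = cc * v i0 u + (cc * lam) * (Pi.single t (1:F) : Fin k → F) u := by
          simp [mul_add, mul_assoc]
        rw [hrhs, hcl]
        by_cases huT : u ∈ T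
        · rw [hvT i0 u huT, mul_zero, zero_add, Pi.single_apply]
          by_cases hut : u = t
          · subst hut
            rw [if_pos rfl, mul_one]
          · rw [if_neg hut, mul_zero, hxT0 u huT hut]
        · rw [Pi.single_apply, if_neg (fun h => huT (by rw [h]; exact htT)), mul_zero, add_zero]
          have := hoff u huT
          rw [hccdef]
          field_simp
          linear_combination this
  · rintro ⟨c, hc0, rfl⟩
    refine ⟨smul_mem_blockM (Or.inl (Or.inr ⟨hx0, hxcard, hnremx⟩)) hc0, ?_⟩
    exact Submodule.smul_mem _ _ (Submodule.subset_span ⟨none, rfl⟩)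

end TangentY
section TangentX
variable {F : Type*} [Field F] [Fintype F] [DecidableEq F] {k m : ℕ}

theorem tangentX (hm1 : 1 ≤ m) (hmk : m ≤ k - 1) (T : Finset (Fin k)) (hT : T.card = m)
    (v : Fin (m - 1) → Fin k → F) (hv0 : ∀ i, v i ≠ 0)
    (hvind : ∀ i j, i ≠ j → ∀ c : F, v i ≠ c • v j)
    (hvT : ∀ i, ∀ t ∈ T, v i t = 0)
    (hq : m ≤ Fintype.card F ^ (k - m - 1))
    (x : Fin k → F) (hx : x ∈ XT T) :
    ∃ U : Submodule F (Fin k → F), Module.finrank F U = m ∧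
      blockM T v ∩ (U : Set (Fin k → F)) = {y | ∃ c : F, c ≠ 0 ∧ y = c • x} := by
  classical
  obtain ⟨hx0, hxT⟩ := hx
  obtain ⟨u0, hu0⟩ := Function.ne_iff.mp hx0
  have hu0' : x u0 ≠ 0 := by simpa using hu0
  have hu0T : u0 ∉ T := fun h => hu0' (hxT u0 h)
  obtain ⟨t0, ht0T⟩ := Finset.card_pos.mp (by rw [hT]; omega)
  -- enumerate T.erase t0
  have herase : (T.erase t0).card = m - 1 := by
    rw [Finset.card_erase_of_mem ht0T, hT]
  set σ : Fin (m - 1) → Fin k :=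
    fun i => ((T.erase t0).orderIsoOfFin herase i : Fin k) with hσdef
  have hσmem : ∀ i, σ i ∈ T.erase t0 := fun i => ((T.erase t0).orderIsoOfFin herase i).2
  have hσT : ∀ i, σ i ∈ T := fun i => Finset.mem_of_mem_erase (hσmem i)
  have hσt : ∀ i, σ i ≠ t0 := fun i => Finset.ne_of_mem_erase (hσmem i)
  have hσinj : Function.Injective σ := fun i j h =>
    (OrderIso.injective _) (Subtype.ext h)
  have hσsurj : ∀ u ∈ T.erase t0, ∃ i, σ i = u := by
    intro u hu
    exact ⟨((T.erase t0).orderIsoOfFin herase).symm ⟨u, hu⟩,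
      congrArg Subtype.val (((T.erase t0).orderIsoOfFin herase).apply_symm_apply ⟨u, hu⟩)⟩
  -- choose the auxiliary off-T vectors using the cardinality assumption
  set S' : Finset (Fin k) := Tᶜ.erase u0 with hS'def
  have hu0c : u0 ∈ Tᶜ := Finset.mem_compl.mpr hu0T
  have hS'card : S'.card = k - m - 1 := by
    rw [hS'def, Finset.card_erase_of_mem hu0c, Finset.card_compl, Fintype.card_fin, hT]
  have hqcard : Fintype.card (Option (Fin (m - 1)))
      ≤ Fintype.card ({u // u ∈ S'} → F) := by
    rw [Fintype.card_option, Fintype.card_fin, Fintype.card_fun, Fintype.card_coe, hS'card]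
    omega
  obtain ⟨ε⟩ := Function.Embedding.nonempty_of_card_le hqcard
  set W : Fin (m - 1) → Fin k → F := fun i u =>
    if hu : u ∈ S' then ε (some i) ⟨u, hu⟩ - ε none ⟨u, hu⟩ else 0 with hWdef
  have hWT : ∀ i, ∀ u ∈ T, W i u = 0 := by
    intro i u hu
    rw [hWdef]
    have : u ∉ S' := fun h => (Finset.mem_compl.mp (Finset.mem_of_mem_erase h)) hu
    simp [this]
  have hWu0 : ∀ i, W i u0 = 0 := by
    intro i
    rw [hWdef]
    have : u0 ∉ S' := Finset.notMem_erase u0 _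
    simp [this]
  have hW0 : ∀ i, W i ≠ 0 := by
    intro i h
    have : ε (some i) = ε none := by
      funext u'
      obtain ⟨u, hu⟩ := u'
      have := congrFun h u
      rw [hWdef] at this
      simp only [hu, dif_pos, Pi.zero_apply] at this
      linear_combination this
    exact (Option.some_ne_none i) (ε.injective this)
  have hWdiff : ∀ i j, i ≠ j → W i ≠ W j := by
    intro i j hij h
    have : ε (some i) = ε (some j) := by
      funext u'
      obtain ⟨u, hu⟩ := u'
      have := congrFun h u
      rw [hWdef] at this
      simp only [hu, dif_pos] at this
      linear_combination this
    exact hij (Option.some_injective _ (ε.injective this))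
  -- the spanning family
  set g : Fin (m - 1) → Fin k → F := fun i =>
    (Pi.single (σ i) (1:F) : Fin k → F) - (Pi.single t0 (1:F) : Fin k → F) + W i with hgdef
  set f : Option (Fin (m - 1)) → Fin k → F := fun o => o.elim x g with hfdef
  -- coordinate computations
  have key : ∀ (a : F) (b : Fin (m - 1) → F) (u : Fin k),
      (a • x + ∑ i, b i • g i) u = a * x u
        + ∑ i, b i * ((Pi.single (σ i) (1:F) : Fin k → F) u
            - (Pi.single t0 (1:F) : Fin k → F) u + W i u) := by
    intro a b u
    simp [hgdef, Finset.sum_apply, mul_add]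
  have keyT : ∀ (a : F) (b : Fin (m - 1) → F), ∀ u ∈ T,
      (a • x + ∑ i, b i • g i) u
        = ∑ i, b i * ((Pi.single (σ i) (1:F) : Fin k → F) u
            - (Pi.single t0 (1:F) : Fin k → F) u) := by
    intro a b u hu
    rw [key, hxT u hu, mul_zero, zero_add]
    exact Finset.sum_congr rfl fun i _ => by rw [hWT i u hu, add_zero]
  have keyt0 : ∀ (a : F) (b : Fin (m - 1) → F),
      (a • x + ∑ i, b i • g i) t0 = - ∑ i, b i := by
    intro a b
    rw [keyT a b t0 ht0T, ← Finset.sum_neg_distrib]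
    apply Finset.sum_congr rfl
    intro i _
    rw [Pi.single_apply, if_neg (fun h => hσt i h.symm), Pi.single_apply, if_pos rfl]
    ring
  have keyσ : ∀ (a : F) (b : Fin (m - 1) → F) (i0 : Fin (m - 1)),
      (a • x + ∑ i, b i • g i) (σ i0) = b i0 := by
    intro a b i0
    rw [keyT a b (σ i0) (hσT i0)]
    have : ∀ i, b i * ((Pi.single (σ i) (1:F) : Fin k → F) (σ i0)
        - (Pi.single t0 (1:F) : Fin k → F) (σ i0))
        = b i * (Pi.single (σ i) (1:F) : Fin k → F) (σ i0) := by
      intro i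
      rw [Pi.single_apply (i := t0), if_neg (hσt i0), sub_zero]
    rw [Finset.sum_congr rfl fun i _ => this i, sum_single_eval_eq σ hσinj b i0]
  have keyS : ∀ (a : F) (b : Fin (m - 1) → F), ∀ u ∉ T,
      (a • x + ∑ i, b i • g i) u = a * x u + ∑ i, b i * W i u := by
    intro a b u hu
    rw [key]
    congr 1
    apply Finset.sum_congr rfl
    intro i _
    rw [Pi.single_apply, if_neg (fun h => hu (by rw [h]; exact hσT i)),
      Pi.single_apply, if_neg (fun h => hu (by rw [h]; exact ht0T)), sub_zero, zero_add]
  have keyu0 : ∀ (a : F) (b : Fin (m - 1) → F),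
      (a • x + ∑ i, b i • g i) u0 = a * x u0 := by
    intro a b
    rw [keyS a b u0 hu0T, Finset.sum_eq_zero (fun i _ => by rw [hWu0 i, mul_zero]), add_zero]
  -- linear independence
  have hli : LinearIndependent F f := by
    rw [Fintype.linearIndependent_iff]
    intro c hc
    rw [Fintype.sum_option] at hc
    have hc' : c none • x + ∑ i, c (some i) • g i = 0 := hc
    have hb : ∀ i0, c (some i0) = 0 := by
      intro i0
      have := congrFun hc' (σ i0)
      rw [keyσ] at this
      simpa using this
    have ha : c none = 0 := by
      have := congrFun hc' u0
      rw [keyu0] at this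
      simpa [hu0'] using this
    intro o
    cases o with
    | none => exact ha
    | some i => exact hb i
  refine ⟨Submodule.span F (Set.range f), ?_, ?_⟩
  · rw [finrank_span_eq_card hli, Fintype.card_option, Fintype.card_fin]
    omega
  ext y
  constructor
  · rintro ⟨hyM, hyU⟩
    obtain ⟨c, hc⟩ := (Submodule.mem_span_range_iff_exists_fun F).mp hyU
    rw [Fintype.sum_option] at hc
    set a := c none with hadef
    set b : Fin (m - 1) → F := fun i => c (some i) with hbdef
    have hy : a • x + ∑ i, b i • g i = y := hc
    have hyt0 : y t0 = - ∑ i, b i := by rw [← hy]; exact keyt0 a b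
    have hyσ : ∀ i0, y (σ i0) = b i0 := by
      intro i0; rw [← hy]; exact keyσ a b i0
    have hyS : ∀ u ∉ T, y u = a * x u + ∑ i, b i * W i u := by
      intro u hu; rw [← hy]; exact keyS a b u hu
    have hyu0 : y u0 = a * x u0 := by rw [← hy]; exact keyu0 a b
    set B : Finset (Fin (m - 1)) := Finset.univ.filter (fun i => b i ≠ 0) with hBdef
    have hbz : ∀ i, i ∉ B → b i = 0 := by
      intro i hi
      by_contra h
      exact hi (by simp [hBdef, h])
    have hbB : ∀ i, i ∈ B → b i ≠ 0 := fun i hi => (Finset.mem_filter.mp hi).2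
    rcases hyM with (hX | hY) | hZ
    · -- y ∈ XT : y is a multiple of x
      obtain ⟨hy0, hyT⟩ := hX
      have hb : ∀ i0, b i0 = 0 := by
        intro i0
        rw [← hyσ i0]
        exact hyT (σ i0) (hσT i0)
      have hyx : y = a • x := by
        rw [← hy]
        simp [funext hb]
      have ha : a ≠ 0 := by
        intro h
        apply hy0
        rw [hyx, h, zero_smul]
      exact ⟨a, ha, hyx⟩
    · -- y ∈ YT : impossible
      exfalso
      obtain ⟨hy0, hcard1, hnrem⟩ := hY
      by_cases hB0 : B.card = 0
      · have hb : ∀ i, b i = 0 := fun i => hbz i (by rw [Finset.card_eq_zero.mp hB0]; simp)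
        have : suppF y ∩ T = ∅ := by
          apply Finset.eq_empty_of_forall_notMem
          intro u hu
          obtain ⟨hus, huT⟩ := Finset.mem_inter.mp hu
          apply mem_suppF.mp hus
          by_cases hut : u = t0
          · subst hut
            rw [hyt0]
            simp [funext hb]
          · obtain ⟨i1, hi1⟩ := hσsurj u (Finset.mem_erase.mpr ⟨hut, huT⟩)
            rw [← hi1, hyσ i1, hb i1]
        rw [this] at hcard1
        simp at hcard1
      · by_cases hB1 : B.card = 1
        · obtain ⟨i0, hi0⟩ := Finset.card_eq_one.mp hB1
          have hbi0 : b i0 ≠ 0 := hbB i0 (by rw [hi0]; simp)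
          have hsum : ∑ i, b i = b i0 := by
            rw [Finset.sum_eq_single i0]
            · intro i _ hne
              exact hbz i (by rw [hi0]; simpa using hne)
            · simp
          have h1 : σ i0 ∈ suppF y ∩ T := Finset.mem_inter.mpr
            ⟨mem_suppF.mpr (by rw [hyσ i0]; exact hbi0), hσT i0⟩
          have h2 : t0 ∈ suppF y ∩ T := Finset.mem_inter.mpr
            ⟨mem_suppF.mpr (by rw [hyt0, hsum]; simpa using hbi0), ht0T⟩
          have : 1 < (suppF y ∩ T).card := Finset.one_lt_card.mpr
            ⟨σ i0, h1, t0, h2, hσt i0⟩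
          omega
        · have hB2 : 1 < B.card := by omega
          obtain ⟨i1, hi1, i2, hi2, h12⟩ := Finset.one_lt_card.mp hB2
          have hmm : ∀ i, i ∈ B → σ i ∈ suppF y ∩ T := fun i hi => Finset.mem_inter.mpr
            ⟨mem_suppF.mpr (by rw [hyσ i]; exact hbB i hi), hσT i⟩
          have : 1 < (suppF y ∩ T).card := Finset.one_lt_card.mpr
            ⟨σ i1, hmm i1 hi1, σ i2, hmm i2 hi2, fun h => h12 (hσinj h)⟩
          omega
    · -- y ∈ ZT : impossible
      exfalso
      obtain ⟨hy0, hysub, hycard⟩ := hZ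
      have hyout : ∀ u, u ∉ T → y u = 0 := by
        intro u hu
        by_contra h
        exact hu (hysub (mem_suppF.mpr h))
      have ha : a = 0 := by
        have := hyu0
        rw [hyout u0 hu0T] at this
        exact (mul_eq_zero.mp this.symm).resolve_right hu0'
      have hWsum : ∑ i, b i • W i = 0 := by
        funext u
        rw [Finset.sum_apply]
        simp only [Pi.smul_apply, smul_eq_mul, Pi.zero_apply]
        by_cases huT : u ∈ T
        · exact Finset.sum_eq_zero fun i _ => by rw [hWT i u huT, mul_zero]
        · have := hyS u huT
          rw [hyout u huT, ha, zero_mul, zero_add] at this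
          exact this.symm
      have hWres : ∑ i ∈ B, b i • W i = 0 := by
        rw [hBdef, Finset.sum_filter_of_ne (fun i _ h => by
          intro hb; exact h (by simp [hb]))]
        exact hWsum
      by_cases hB0 : B.card = 0
      · have hb : ∀ i, b i = 0 := fun i => hbz i (by rw [Finset.card_eq_zero.mp hB0]; simp)
        apply hy0
        rw [← hy, ha]
        simp [funext hb]
      · by_cases hB1 : B.card = 1
        · obtain ⟨i0, hi0⟩ := Finset.card_eq_one.mp hB1
          rw [hi0, Finset.sum_singleton] at hWres
          exact hW0 i0 ((smul_eq_zero.mp hWres).resolve_left (hbB i0 (by rw [hi0]; simp)))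
        · by_cases hB2 : B.card = 2
          · obtain ⟨i1, i2, h12, hset⟩ := Finset.card_eq_two.mp hB2
            have hbi1 : b i1 ≠ 0 := hbB i1 (by rw [hset]; simp)
            have hbi2 : b i2 ≠ 0 := hbB i2 (by rw [hset]; simp)
            -- supp y = {σ i1, σ i2} hence y t0 = 0 hence b i2 = - b i1
            have hsub2 : {σ i1, σ i2} ⊆ suppF y := by
              intro u hu
              simp only [Finset.mem_insert, Finset.mem_singleton] at hu
              rcases hu with rfl | rfl
              · exact mem_suppF.mpr (by rw [hyσ i1]; exact hbi1)
              · exact mem_suppF.mpr (by rw [hyσ i2]; exact hbi2)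
            have hcard2 : ({σ i1, σ i2} : Finset (Fin k)).card = 2 := by
              rw [Finset.card_insert_of_notMem (by
                simp only [Finset.mem_singleton]
                exact fun h => h12 (hσinj h)), Finset.card_singleton]
            have heq2 : ({σ i1, σ i2} : Finset (Fin k)) = suppF y :=
              Finset.eq_of_subset_of_card_le hsub2 (by omega)
            have ht0n : y t0 = 0 := by
              by_contra h
              have : t0 ∈ suppF y := mem_suppF.mpr h
              rw [← heq2] at this
              simp only [Finset.mem_insert, Finset.mem_singleton] at this
              rcases this with h' | h'
              exacts [hσt i1 h'.symm, hσt i2 h'.symm]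
            have hsumb : ∑ i, b i = 0 := by
              rw [hyt0] at ht0n
              linear_combination -ht0n
            have hsumB : b i1 + b i2 = 0 := by
              have : ∑ i ∈ B, b i = ∑ i, b i := by
                rw [hBdef, Finset.sum_filter_of_ne (fun i _ h => by
                  intro hb; exact h (by simp [hb]))]
              rw [hset, Finset.sum_pair h12] at this
              rw [this, hsumb]
            have hb21 : b i2 = - b i1 := by linear_combination hsumB
            rw [hset, Finset.sum_pair h12, hb21, neg_smul] at hWres
            have : b i1 • W i1 = b i1 • W i2 := by
              linear_combination (norm := module) hWres
            exact hWdiff i1 i2 h12 (smul_right_injective _ hbi1 this)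
          · have hB3 : 2 < B.card := by omega
            obtain ⟨i1, hi1, i2, hi2, i3, hi3, h12, h13, h23⟩ := Finset.two_lt_card.mp hB3
            have hmm : ∀ i, i ∈ B → σ i ∈ suppF y := fun i hi =>
              mem_suppF.mpr (by rw [hyσ i]; exact hbB i hi)
            have : 2 < (suppF y).card := Finset.two_lt_card.mpr
              ⟨σ i1, hmm i1 hi1, σ i2, hmm i2 hi2, σ i3, hmm i3 hi3,
                fun h => h12 (hσinj h), fun h => h13 (hσinj h), fun h => h23 (hσinj h)⟩
            omega
  · rintro ⟨c, hc0, rfl⟩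
    refine ⟨smul_mem_blockM (Or.inl (Or.inl ⟨hx0, hxT⟩)) hc0, ?_⟩
    exact Submodule.smul_mem _ _ (Submodule.subset_span ⟨none, rfl⟩)

end TangentX

/-- if moreover `m ≤ q^(k-m-1)`, then `M` is a *minimal*
`(k-m)`-block over `F_q`: every `m`-dimensional subspace of `F_q^k` contains an element
of `M`, and every `x ∈ M` has a tangent, i.e. an `m`-dimensional subspace `U` with
`M ∩ U` equal to the set of nonzero scalar multiples of `x`. -/
theorem stmt18 {F : Type*} [Field F] [Fintype F] [DecidableEq F] {k m : ℕ}
    (hm1 : 1 ≤ m) (hmk : m ≤ k - 1)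
    (T : Finset (Fin k)) (hT : T.card = m)
    (v : Fin (m - 1) → Fin k → F) (hv0 : ∀ i, v i ≠ 0)
    (hvind : ∀ i j, i ≠ j → ∀ c : F, v i ≠ c • v j)
    (hvT : ∀ i, ∀ t ∈ T, v i t = 0)
    (hq : m ≤ Fintype.card F ^ (k - m - 1)) :
    (∀ U : Submodule F (Fin k → F), Module.finrank F U = m →
      ∃ x ∈ blockM T v, x ∈ U) ∧
    (∀ x ∈ blockM T v, ∃ U : Submodule F (Fin k → F), Module.finrank F U = m ∧
      blockM T v ∩ (U : Set (Fin k → F)) = {y | ∃ c : F, c ≠ 0 ∧ y = c • x}) := by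
  constructor
  · intro U hU
    exact part1 hm1 T hT v hv0 hvT U hU
  · intro x hx
    rcases hx with (hX | hY) | hZ
    · exact tangentX hm1 hmk T hT v hv0 hvind hvT hq x hX
    · exact tangentY hm1 T hT v hv0 hvind hvT x hY
    · exact tangentZ hm1 T hT v hv0 hvind hvT x hZ
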